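/- Let (Ω, ℱ, P) be a probability space, 𝒢 ⊆ ℱ a sub-σ-algebra, θ a square-integrable real random variable, and ε an independent-of-σ(𝒢, θ) square-integrable real random variable with E[ε]=0 and E[ε²]=v. Set y = θ + ε, μ_mix = E[θ], μ_loc = E[θ|𝒢]. Let B be a 𝒢-measurable weight with 0 ≤ B ≤ 1 − c for a constant c > 0, and let μ̂ be a 𝒢-measurable square-integrable plug-in center with E[(μ̂ − μ_loc)²] ≤ ε_μ. Then E[((1−B)μ̂ + B·y − θ)²] ≤ E[((1−B)μ_mix + B·y − θ)²] − c²·Var(E[θ|𝒢]) + 2·√(ε_μ)·(E[(θ − μ_loc)²])^{1/2} + ε_μ. In particular, if c²·Var(E[θ|𝒢]) > 2·√(ε_μ)·(E[(θ − μ_loc)²])^{1/2} + ε_μ, then the plug-in local shrinkage estimator has strictly smaller Bayes risk than the global shrinkage estimator. -/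

import Mathlib

/-!
For every `𝒢`-measurable center `M`, the error of shrinkage toward `M` splits as
`(1 - B)(M - μ_loc)` plus the oracle error `(1 - B) μ_loc + B y - θ = B ε - (1 - B)(θ - μ_loc)`,
and the two pieces are orthogonal in `L²`: against `θ - μ_loc` by the defining property of
`E[θ|𝒢]`, against `B ε` by independence and `E[ε] = 0`. Hence the risk of `M` is the oracle
risk plus `E[(1 - B)² (M - μ_loc)²]`. For `M = μ̂` this excess is at most `ε_μ` (as `0 ≤ 1 - B ≤ 1`);
for `M = E[θ]` it is at least `c² Var(E[θ|𝒢])` (as `1 - B ≥ c`). So no cross term between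
`μ̂ - μ_loc` and `θ - μ_loc` survives, and the penalty `2 √ε_μ (E[(θ - μ_loc)²])^{1/2}` is only
nonnegative slack.
-/

open MeasureTheory ProbabilityTheory

section

variable {Ω : Type*} {m mΩ : MeasurableSpace Ω} {P : Measure Ω}

theorem MeasureTheory.MemLp.mul_of_abs_le {p : ENNReal} {w f : Ω → ℝ} {C : ℝ}
    (hw : AEStronglyMeasurable w P) (hwC : ∀ ω, |w ω| ≤ C) (hf : MemLp f p P) :
    MemLp (fun ω => w ω * f ω) p P :=
  hf.mul' (memLp_top_of_bound hw C (ae_of_all _ hwC))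

theorem integral_mul_sq_le_integral_sq {w f : Ω → ℝ} (hw : AEStronglyMeasurable w P)
    (hw1 : ∀ ω, |w ω| ≤ 1) (hf : MemLp f 2 P) :
    ∫ ω, (w ω * f ω) ^ 2 ∂P ≤ ∫ ω, f ω ^ 2 ∂P := by
  refine integral_mono (hf.mul_of_abs_le hw hw1).integrable_sq hf.integrable_sq fun ω => ?_
  rw [mul_pow]
  exact mul_le_of_le_one_left (sq_nonneg _) ((sq_le_one_iff_abs_le_one _).2 (hw1 ω))

theorem mul_integral_sq_le_integral_mul_sq {w f : Ω → ℝ} {c C : ℝ}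
    (hw : AEStronglyMeasurable w P) (hwC : ∀ ω, |w ω| ≤ C) (hc : ∀ ω, c ^ 2 ≤ w ω ^ 2)
    (hf : MemLp f 2 P) :
    c ^ 2 * ∫ ω, f ω ^ 2 ∂P ≤ ∫ ω, (w ω * f ω) ^ 2 ∂P := by
  rw [← integral_const_mul]
  refine integral_mono (hf.integrable_sq.const_mul _) (hf.mul_of_abs_le hw hwC).integrable_sq
    fun ω => ?_
  rw [mul_pow]
  exact mul_le_mul_of_nonneg_right (hc ω) (sq_nonneg _)

theorem integral_add_sq_of_integral_mul_eq_zero {u e : Ω → ℝ} (hu : MemLp u 2 P)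
    (he : MemLp e 2 P) (horth : ∫ ω, u ω * e ω ∂P = 0) :
    ∫ ω, (u ω + e ω) ^ 2 ∂P = ∫ ω, e ω ^ 2 ∂P + ∫ ω, u ω ^ 2 ∂P := by
  have hue : Integrable (fun ω => u ω * e ω) P := hu.integrable_mul he
  have huu := hu.integrable_sq
  have hee := he.integrable_sq
  calc ∫ ω, (u ω + e ω) ^ 2 ∂P = ∫ ω, e ω ^ 2 + u ω ^ 2 + 2 * (u ω * e ω) ∂P := by
        congr 1; ext ω; ring
    _ = _ := by
      rw [integral_add (by fun_prop) (by fun_prop), integral_add hee huu, integral_const_mul,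
        horth, mul_zero, add_zero]

theorem integral_mul_eq_zero_of_indep (hm : m ≤ mΩ) {F ε : Ω → ℝ}
    (hindep : Indep m (MeasurableSpace.comap ε Real.measurableSpace) P) (hF : Measurable[m] F)
    (hε : AEStronglyMeasurable ε P) (hε0 : ∫ ω, ε ω ∂P = 0) :
    ∫ ω, F ω * ε ω ∂P = 0 := by
  have hFε : IndepFun F ε P := by
    rw [IndepFun_iff_Indep]
    exact indep_of_indep_of_le_left hindep hF.comap_le
  rw [hFε.integral_fun_mul_eq_mul_integral (hF.mono hm le_rfl).aestronglyMeasurable hε, hε0,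
    mul_zero]

theorem integral_mul_sub_condExp_eq_zero (hm : m ≤ mΩ) [SigmaFinite (P.trim hm)]
    {g f : Ω → ℝ} (hg : StronglyMeasurable[m] g) (hf : Integrable f P)
    (hgf : Integrable (fun ω => g ω * (f ω - P[f|m] ω)) P) :
    ∫ ω, g ω * (f ω - P[f|m] ω) ∂P = 0 := by
  have hres : P[f - P[f|m]|m] =ᵐ[P] 0 := by
    filter_upwards [condExp_sub hf (integrable_condExp (m := m)) m] with ω h
    rw [h, condExp_of_stronglyMeasurable hm stronglyMeasurable_condExp integrable_condExp]
    simp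
  calc ∫ ω, g ω * (f ω - P[f|m] ω) ∂P = ∫ ω, P[g * (f - P[f|m])|m] ω ∂P :=
        (integral_condExp hm).symm
    _ = ∫ ω, (g * P[f - P[f|m]|m]) ω ∂P :=
        integral_congr_ae (condExp_mul_of_stronglyMeasurable_left hg hgf
          (hf.sub integrable_condExp))
    _ = ∫ _, (0 : ℝ) ∂P := integral_congr_ae (hres.mono fun ω h => by simp [h])
    _ = 0 := integral_zero Ω ℝ

theorem integral_shrinkage_sq_eq_oracle_add [IsFiniteMeasure P] (hm : m ≤ mΩ)
    {θ ε B M : Ω → ℝ} {C : ℝ} (hθ : MemLp θ 2 P) (hε : MemLp ε 2 P) (hε0 : ∫ ω, ε ω ∂P = 0)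
    (hindep : Indep m (MeasurableSpace.comap ε Real.measurableSpace) P)
    (hB : Measurable[m] B) (hBC : ∀ ω, |B ω| ≤ C) (hM : Measurable[m] M) (hM2 : MemLp M 2 P) :
    ∫ ω, ((1 - B ω) * M ω + B ω * (θ ω + ε ω) - θ ω) ^ 2 ∂P
      = ∫ ω, ((1 - B ω) * P[θ|m] ω + B ω * (θ ω + ε ω) - θ ω) ^ 2 ∂P
        + ∫ ω, ((1 - B ω) * (M ω - P[θ|m] ω)) ^ 2 ∂P := by
  set μl := P[θ|m]
  have hμl2 : MemLp μl 2 P := hθ.condExp one_le_two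
  have hWC : ∀ ω, |1 - B ω| ≤ 1 + C := fun ω => by
    linarith [abs_sub (1 : ℝ) (B ω), abs_one (α := ℝ), hBC ω]
  have hW : Measurable[m] (fun ω => 1 - B ω) := by fun_prop
  set u := fun ω => (1 - B ω) * (M ω - μl ω)
  have hu2 : MemLp u 2 P :=
    (hM2.sub hμl2).mul_of_abs_le (hW.mono hm le_rfl).aestronglyMeasurable hWC
  have he2 : MemLp (fun ω => (1 - B ω) * μl ω + B ω * (θ ω + ε ω) - θ ω) 2 P :=
    ((hμl2.mul_of_abs_le (hW.mono hm le_rfl).aestronglyMeasurable hWC).add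
      ((hθ.add hε).mul_of_abs_le (hB.mono hm le_rfl).aestronglyMeasurable hBC)).sub hθ
  have horth : ∫ ω, u ω * ((1 - B ω) * μl ω + B ω * (θ ω + ε ω) - θ ω) ∂P = 0 := by
    have hWu : Integrable (fun ω => (1 - B ω) * u ω * (θ ω - μl ω)) P :=
      (hu2.mul_of_abs_le (hW.mono hm le_rfl).aestronglyMeasurable hWC).integrable_mul
        (hθ.sub hμl2)
    have hBu : Integrable (fun ω => B ω * u ω * ε ω) P :=
      (hu2.mul_of_abs_le (hB.mono hm le_rfl).aestronglyMeasurable hBC).integrable_mul hε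
    calc ∫ ω, u ω * ((1 - B ω) * μl ω + B ω * (θ ω + ε ω) - θ ω) ∂P
        = ∫ ω, B ω * u ω * ε ω - (1 - B ω) * u ω * (θ ω - μl ω) ∂P := by
          congr 1; ext ω; ring
      _ = 0 := by
        rw [integral_sub hBu hWu, integral_mul_eq_zero_of_indep hm hindep (by fun_prop) hε.1 hε0,
          integral_mul_sub_condExp_eq_zero hm (by fun_prop) (hθ.integrable one_le_two) hWu,
          sub_zero]
  rw [← integral_add_sq_of_integral_mul_eq_zero hu2 he2 horth]
  congr 1; ext ω; ring

end

theorem stmt_10_general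
    {Ω : Type*} {mΩ : MeasurableSpace Ω} (P : Measure Ω) [IsProbabilityMeasure P]
    (m : MeasurableSpace Ω) (hm : m ≤ mΩ)
    (θ ε : Ω → ℝ)
    (hθ : MemLp θ 2 P) (hε : MemLp ε 2 P)
    (hεmean : ∫ ω, ε ω ∂P = 0)
    (hindep : Indep (m ⊔ MeasurableSpace.comap θ Real.measurableSpace)
        (MeasurableSpace.comap ε Real.measurableSpace) P)
    (y : Ω → ℝ) (hy : y = fun ω => θ ω + ε ω)
    (B : Ω → ℝ) (hBmeas : Measurable[m] B)
    (c : ℝ) (hc : 0 < c) (hB : ∀ ω, 0 ≤ B ω ∧ B ω ≤ 1 - c)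
    (μhat : Ω → ℝ) (hμhatMeas : Measurable[m] μhat) (hμhat : MemLp μhat 2 P)
    (εμ : ℝ) (hεμ : ∫ ω, (μhat ω - (P[θ|m]) ω) ^ 2 ∂P ≤ εμ) :
    (∫ ω, ((1 - B ω) * μhat ω + B ω * y ω - θ ω) ^ 2 ∂P
      ≤ (∫ ω, ((1 - B ω) * (∫ ω', θ ω' ∂P) + B ω * y ω - θ ω) ^ 2 ∂P)
        - c ^ 2 * (∫ ω, ((P[θ|m]) ω - ∫ ω', θ ω' ∂P) ^ 2 ∂P)
        + 2 * Real.sqrt εμ * Real.sqrt (∫ ω, (θ ω - (P[θ|m]) ω) ^ 2 ∂P) + εμ)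
    ∧ (c ^ 2 * (∫ ω, ((P[θ|m]) ω - ∫ ω', θ ω' ∂P) ^ 2 ∂P)
        > 2 * Real.sqrt εμ * Real.sqrt (∫ ω, (θ ω - (P[θ|m]) ω) ^ 2 ∂P) + εμ →
      (∫ ω, ((1 - B ω) * μhat ω + B ω * y ω - θ ω) ^ 2 ∂P)
        < ∫ ω, ((1 - B ω) * (∫ ω', θ ω' ∂P) + B ω * y ω - θ ω) ^ 2 ∂P) := by
  subst hy
  set K := ∫ ω', θ ω' ∂P
  have hμl2 : MemLp P[θ|m] 2 P := hθ.condExp one_le_two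
  have hBC : ∀ ω, |B ω| ≤ 1 := fun ω => abs_le.2 ⟨by linarith [hB ω], by linarith [hB ω]⟩
  have hW1 : ∀ ω, |1 - B ω| ≤ 1 := fun ω => abs_le.2 ⟨by linarith [hB ω], by linarith [hB ω]⟩
  have hWc : ∀ ω, c ^ 2 ≤ (1 - B ω) ^ 2 := fun ω =>
    pow_le_pow_left₀ hc.le (by linarith [hB ω]) 2
  have hW := ((hBmeas.mono hm le_rfl).const_sub 1).aestronglyMeasurable (μ := P)
  have risk_eq := fun {M} => integral_shrinkage_sq_eq_oracle_add hm hθ hε hεmean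
    (indep_of_indep_of_le_left hindep le_sup_left) hBmeas hBC (M := M)
  have hloc : ∫ ω, ((1 - B ω) * (μhat ω - P[θ|m] ω)) ^ 2 ∂P ≤ εμ :=
    (integral_mul_sq_le_integral_sq hW hW1 (hμhat.sub hμl2)).trans hεμ
  have hglob : c ^ 2 * ∫ ω, (P[θ|m] ω - K) ^ 2 ∂P
      ≤ ∫ ω, ((1 - B ω) * (K - P[θ|m] ω)) ^ 2 ∂P := by
    simp_rw [sub_sq_comm (P[θ|m] _) K]
    exact mul_integral_sq_le_integral_mul_sq hW hW1 hWc ((memLp_const K).sub hμl2)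
  have hpenalty : 0 ≤ 2 * √εμ * √(∫ ω, (θ ω - P[θ|m] ω) ^ 2 ∂P) := by positivity
  rw [risk_eq hμhatMeas hμhat, risk_eq measurable_const (memLp_const K)]
  exact ⟨by linarith, fun _ => by linarith⟩

/-- Theorem 5.2 (plug-in dominance of local EB, quantitative form): with a
`𝒢`-measurable plug-in center `μ̂` satisfying `E[(μ̂ - μ_loc)²] ≤ ε_μ`, the
plug-in local risk is at most the global risk minus the oracle gap
`c²·Var(E[θ|𝒢])` plus the estimation penalty
`2·√ε_μ·(E[(θ - μ_loc)²])^{1/2} + ε_μ`; strict dominance follows when the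
oracle gap exceeds the penalty. -/
theorem stmt_10
    {Ω : Type*} {mΩ : MeasurableSpace Ω} (P : Measure Ω) [IsProbabilityMeasure P]
    (m : MeasurableSpace Ω) (hm : m ≤ mΩ)
    (θ ε : Ω → ℝ) (v : ℝ)
    (hθ : MemLp θ 2 P) (hε : MemLp ε 2 P)
    (hεmean : ∫ ω, ε ω ∂P = 0) (hεsq : ∫ ω, (ε ω) ^ 2 ∂P = v)
    (hindep : Indep (m ⊔ MeasurableSpace.comap θ Real.measurableSpace)
        (MeasurableSpace.comap ε Real.measurableSpace) P)
    (y : Ω → ℝ) (hy : y = fun ω => θ ω + ε ω)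
    (B : Ω → ℝ) (hBmeas : Measurable[m] B)
    (c : ℝ) (hc : 0 < c) (hB : ∀ ω, 0 ≤ B ω ∧ B ω ≤ 1 - c)
    (μhat : Ω → ℝ) (hμhatMeas : Measurable[m] μhat) (hμhat : MemLp μhat 2 P)
    (εμ : ℝ) (hεμ : ∫ ω, (μhat ω - (P[θ|m]) ω) ^ 2 ∂P ≤ εμ) :
    (∫ ω, ((1 - B ω) * μhat ω + B ω * y ω - θ ω) ^ 2 ∂P
      ≤ (∫ ω, ((1 - B ω) * (∫ ω', θ ω' ∂P) + B ω * y ω - θ ω) ^ 2 ∂P)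
        - c ^ 2 * (∫ ω, ((P[θ|m]) ω - ∫ ω', θ ω' ∂P) ^ 2 ∂P)
        + 2 * Real.sqrt εμ * Real.sqrt (∫ ω, (θ ω - (P[θ|m]) ω) ^ 2 ∂P) + εμ)
    ∧ (c ^ 2 * (∫ ω, ((P[θ|m]) ω - ∫ ω', θ ω' ∂P) ^ 2 ∂P)
        > 2 * Real.sqrt εμ * Real.sqrt (∫ ω, (θ ω - (P[θ|m]) ω) ^ 2 ∂P) + εμ →
      (∫ ω, ((1 - B ω) * μhat ω + B ω * y ω - θ ω) ^ 2 ∂P)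
        < ∫ ω, ((1 - B ω) * (∫ ω', θ ω' ∂P) + B ω * y ω - θ ω) ^ 2 ∂P) :=
  stmt_10_general P m hm θ ε hθ hε hεmean hindep y hy B hBmeas c hc hB μhat hμhatMeas hμhat εμ hεμ
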